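/- arXiv:2210.11347 — 4 statements merged into one kernel-verified Lean document; each statement's English description precedes it below -/
import Mathlib

section
/- First Hadamard variation formula: let M be an n×n Hermitian matrix with a simple eigenvalue μ and unit eigenvector v, and let B be Hermitian. Suppose λ : (−ε, ε) → ℝ and w : (−ε, ε) → ℂⁿ are differentiable at 0, with (M + tB) w(t) = λ(t) w(t), ‖w(t)‖ = 1 for all t, λ(0) = μ and w(0) = v. Then λ′(0) = v* B v. In particular, if M = QΛQ* with Q unitary, Λ = diag(λ₁,…,λₙ), and μ = λ_j, then λ′(0) = (Q*BQ)_{jj}. -/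
/-!
Pair the eigen-equation `(M + tB) w(t) = λ(t) w(t)` with the left eigenvector `v*` of
the Hermitian `M`: the `M`-terms cancel and `(λ(t) - μ) ⟨v, w(t)⟩ = t ⟨v, B w(t)⟩` for small `t`.
Differentiating at `0`, where `⟨v, w(0)⟩ = ‖v‖² = 1`, gives `λ'(0) = ⟨v, B v⟩`. With
`v = Q e_j` this number is the diagonal entry `(Q* B Q)_{jj}`.
-/

open Matrix Filter Topology

section
variable {𝕜 : Type*} [RCLike 𝕜] {n : Type*} [Fintype n]

theorem star_dotProduct_self_eq_sum_norm_sq (v : n → 𝕜) :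
    star v ⬝ᵥ v = ((∑ i, ‖v i‖ ^ 2 : ℝ) : 𝕜) := by
  simp [dotProduct, RCLike.conj_mul]

theorem star_vecMul_of_mulVec_eq_smul {M : Matrix n n 𝕜} (hM : M.IsHermitian) {μ : ℝ}
    {v : n → 𝕜} (hv : M *ᵥ v = (μ : 𝕜) • v) : star v ᵥ* M = (μ : 𝕜) • star v := by
  rw [← hM.eq, ← star_mulVec, hv, star_smul, RCLike.star_def, RCLike.conj_ofReal]

theorem sub_mul_star_dotProduct_eq {M B : Matrix n n 𝕜} (hM : M.IsHermitian)
    {μ lam t : ℝ} {v w : n → 𝕜} (hv : M *ᵥ v = (μ : 𝕜) • v)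
    (hw : (M + t • B) *ᵥ w = (lam : 𝕜) • w) :
    ((lam : 𝕜) - μ) * (star v ⬝ᵥ w) = t * (star v ⬝ᵥ B *ᵥ w) := by
  have e := congrArg (star v ⬝ᵥ ·) hw
  rw [add_mulVec, dotProduct_add, dotProduct_mulVec, star_vecMul_of_mulVec_eq_smul hM hv,
    smul_mulVec, dotProduct_smul, dotProduct_smul, smul_dotProduct] at e
  simp only [smul_eq_mul, RCLike.real_smul_eq_coe_mul] at e
  linear_combination -e

end

theorem DifferentiableAt.const_dotProduct {𝕜 R n : Type*} [NontriviallyNormedField 𝕜]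
    [NormedRing R] [NormedAlgebra 𝕜 R] [Fintype n] {w : 𝕜 → n → R} {x : 𝕜}
    (hw : DifferentiableAt 𝕜 w x) (a : n → R) : DifferentiableAt 𝕜 (fun t => a ⬝ᵥ w t) x := by
  simp only [dotProduct]
  fun_prop

theorem HasDerivAt.eq_of_sub_mul_eventuallyEq_smul {𝕜 F : Type*} [NontriviallyNormedField 𝕜]
    [NormedRing F] [NormedAlgebra 𝕜 F] {f g h : 𝕜 → F} {f' : F} {x : 𝕜}
    (hf : HasDerivAt f f' x) (hg : DifferentiableAt 𝕜 g x) (hg1 : g x = 1)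
    (hh : DifferentiableAt 𝕜 h x)
    (hfgh : (fun t => (f t - f x) * g t) =ᶠ[𝓝 x] fun t => (t - x) • h t) : f' = h x := by
  have hL : HasDerivAt (fun t => (f t - f x) * g t) f' x := by
    simpa [hg1] using (hf.sub_const (f x)).fun_mul hg.hasDerivAt
  have hR : HasDerivAt (fun t => (t - x) • h t) (h x) x := by
    simpa using ((hasDerivAt_id x).sub_const x).fun_smul hh.hasDerivAt
  exact hL.unique (hR.congr_of_eventuallyEq hfgh)

theorem first_hadamard_variation_general (n : ℕ) (M B : Matrix (Fin n) (Fin n) ℂ)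
    (hM : M.IsHermitian)
    (μ : ℝ) (v : Fin n → ℂ)
    (hv_norm : ∑ i, ‖v i‖ ^ 2 = 1)
    (hv_eig : M.mulVec v = (μ : ℂ) • v)
    (ε : ℝ) (hε : 0 < ε)
    (lam : ℝ → ℝ) (w : ℝ → Fin n → ℂ)
    (hlam0 : lam 0 = μ) (hw0 : w 0 = v)
    (heig : ∀ t : ℝ, |t| < ε → (M + t • B).mulVec (w t) = (lam t : ℂ) • w t)
    (hdlam : DifferentiableAt ℝ lam 0) (hdw : DifferentiableAt ℝ w 0) :
    ((deriv lam 0 : ℝ) : ℂ) = star v ⬝ᵥ B.mulVec v ∧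
    ∀ Q : Matrix (Fin n) (Fin n) ℂ, Q ∈ Matrix.unitaryGroup (Fin n) ℂ →
      ∀ j : Fin n, (∀ i, v i = Q i j) →
        ((deriv lam 0 : ℝ) : ℂ) = (Qᴴ * B * Q) j j := by
  have hv_unit : star v ⬝ᵥ w 0 = 1 := by
    rw [hw0, star_dotProduct_self_eq_sum_norm_sq, hv_norm, RCLike.ofReal_one]
  have hB_diff : DifferentiableAt ℝ (fun t => star v ⬝ᵥ B *ᵥ w t) 0 := by
    simpa only [dotProduct_mulVec] using hdw.const_dotProduct (star v ᵥ* B)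
  have hpair : (fun t : ℝ => ((lam t : ℂ) - lam 0) * (star v ⬝ᵥ w t)) =ᶠ[𝓝 0]
      fun t => (t - 0) • (star v ⬝ᵥ B *ᵥ w t) := by
    filter_upwards [Metric.ball_mem_nhds (0 : ℝ) hε] with t ht
    rw [mem_ball_zero_iff, Real.norm_eq_abs] at ht
    rw [hlam0, sub_zero, Complex.real_smul]
    exact sub_mul_star_dotProduct_eq hM hv_eig (heig t ht)
  have hderiv : ((deriv lam 0 : ℝ) : ℂ) = star v ⬝ᵥ B *ᵥ v := by
    simpa only [hw0] using hdlam.hasDerivAt.ofReal_comp.eq_of_sub_mul_eventuallyEq_smul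
      (hdw.const_dotProduct _) hv_unit hB_diff hpair
  refine ⟨hderiv, fun Q _ j hQv => ?_⟩
  have hv_col : v = fun i => Q i j := funext hQv
  rw [hderiv, mul_mul_apply, hv_col]
  rfl

/-- First Hadamard variation formula: if `μ` is a simple eigenvalue of the Hermitian
matrix `M` with unit eigenvector `v`, `B` is Hermitian, and `λ(t)`, `w(t)` are an
eigenvalue/unit-eigenvector family for `M + tB` differentiable at `0` with
`λ(0) = μ`, `w(0) = v`, then `λ′(0) = v* B v`. In particular, if `v = Q e_j` for a
unitary `Q`, then `λ′(0) = (Q* B Q)_{jj}`. -/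
theorem first_hadamard_variation (n : ℕ) (M B : Matrix (Fin n) (Fin n) ℂ)
    (hM : M.IsHermitian) (hB : B.IsHermitian)
    (μ : ℝ) (v : Fin n → ℂ)
    (hv_norm : ∑ i, ‖v i‖ ^ 2 = 1)
    (hv_eig : M.mulVec v = (μ : ℂ) • v)
    (hsimple : ∀ w : Fin n → ℂ, M.mulVec w = (μ : ℂ) • w → ∃ c : ℂ, w = c • v)
    (ε : ℝ) (hε : 0 < ε)
    (lam : ℝ → ℝ) (w : ℝ → Fin n → ℂ)
    (hlam0 : lam 0 = μ) (hw0 : w 0 = v)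
    (heig : ∀ t : ℝ, |t| < ε → (M + t • B).mulVec (w t) = (lam t : ℂ) • w t)
    (hnorm : ∀ t : ℝ, |t| < ε → ∑ i, ‖w t i‖ ^ 2 = 1)
    (hdlam : DifferentiableAt ℝ lam 0) (hdw : DifferentiableAt ℝ w 0) :
    ((deriv lam 0 : ℝ) : ℂ) = star v ⬝ᵥ B.mulVec v ∧
    ∀ Q : Matrix (Fin n) (Fin n) ℂ, Q ∈ Matrix.unitaryGroup (Fin n) ℂ →
      ∀ j : Fin n, (∀ i, v i = Q i j) →
        ((deriv lam 0 : ℝ) : ℂ) = (Qᴴ * B * Q) j j :=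
  first_hadamard_variation_general n M B hM μ v hv_norm hv_eig ε hε lam w hlam0 hw0 heig hdlam hdw
end

section
/- Second Hadamard variation formula: let M = QΛQ* be an n×n Hermitian matrix with simple spectrum, where Q is unitary and Λ = diag(λ₁,…,λₙ) with λ₁ < … < λₙ, and let B be Hermitian. Fix j and suppose λ : (−ε, ε) → ℝ and w : (−ε, ε) → ℂⁿ are twice differentiable at 0, with (M + tB) w(t) = λ(t) w(t), ‖w(t)‖ = 1 for all t, λ(0) = λ_j, w(0) = Q e_j. Then λ″(0) = 2 Σ_{k ≠ j} |(Q*BQ)_{kj}|² / (λ_j − λ_k). -/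
/-!
Pass to the eigenbasis: `v t = Qᴴ *ᵥ w t` solves `(Λ + t • C) *ᵥ v = λ • v` with
`C = Qᴴ * B * Q` and `v 0 = e_j`. Differentiating once at `0` gives `λ'(0) = C j j` and
`(λ_j - λ_k) v'(0)_k = C k j` for `k ≠ j`. Differentiating twice and reading off the `j`-th
coordinate gives `λ''(0) = 2 ∑_{k ≠ j} C j k v'(0)_k`, in which the undetermined coordinates
`v'(0)_j` and `v''(0)_j` cancel; Hermitian symmetry turns `C j k C k j` into `‖C k j‖²`.
-/

open Matrix Filter Topology

section EigenpairPath

variable {𝕜 m ι : Type*} [RCLike 𝕜] [Fintype ι]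

theorem HasDerivAt.matrix_mulVec (A : Matrix m ι 𝕜) {x : ℝ → ι → 𝕜} {x' : ι → 𝕜} {t : ℝ}
    (hx : HasDerivAt x x' t) : HasDerivAt (fun s => A *ᵥ x s) (A *ᵥ x') t :=
  hasDerivAt_pi.2 fun i => HasDerivAt.fun_sum fun k _ => (hasDerivAt_pi.1 hx k).const_mul (A i k)

variable [Fintype m] in
theorem HasDerivAt.affine_mulVec (A C : Matrix m ι 𝕜) {x : ℝ → ι → 𝕜} {x' : ι → 𝕜} {t : ℝ}
    (hx : HasDerivAt x x' t) :
    HasDerivAt (fun s => (A + s • C) *ᵥ x s) ((A + t • C) *ᵥ x' + C *ᵥ x t) t := by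
  have h := (hx.matrix_mulVec A).fun_add ((hasDerivAt_id' t).fun_smul (hx.matrix_mulVec C))
  simp only [one_smul, ← add_assoc, ← smul_mulVec, ← add_mulVec] at h
  exact h

variable {A C : Matrix ι ι 𝕜} {v v' : ℝ → ι → 𝕜} {μ μ' : ℝ → ℝ} {t : ℝ}

theorem eigenpair_first_order {x : ι → 𝕜} {a : ℝ}
    (heq : ∀ᶠ s in 𝓝 t, (A + s • C) *ᵥ v s = μ s • v s)
    (hv : HasDerivAt v x t) (hμ : HasDerivAt μ a t) :
    (A + t • C) *ᵥ x + C *ᵥ v t = μ t • x + a • v t :=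
  (hv.affine_mulVec A C).unique ((hμ.smul hv).congr_of_eventuallyEq heq)

theorem eigenpair_second_order {x : ι → 𝕜} {a : ℝ}
    (heq : ∀ᶠ s in 𝓝 t, (A + s • C) *ᵥ v s = μ s • v s)
    (hv : ∀ᶠ s in 𝓝 t, HasDerivAt v (v' s) s) (hv' : HasDerivAt v' x t)
    (hμ : ∀ᶠ s in 𝓝 t, HasDerivAt μ (μ' s) s) (hμ' : HasDerivAt μ' a t) :
    (A + t • C) *ᵥ x + (2 : ℝ) • C *ᵥ v' t = μ t • x + (2 * μ' t) • v' t + a • v t := by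
  have hfirst : ∀ᶠ s in 𝓝 t, (A + s • C) *ᵥ v' s + C *ᵥ v s = μ s • v' s + μ' s • v s := by
    filter_upwards [heq.eventually_nhds, hv, hμ] with s hs hvs hμs
    exact eigenpair_first_order hs hvs hμs
  have h := ((hv'.affine_mulVec A C).add (hv.self_of_nhds.matrix_mulVec C)).unique
    (((hμ.self_of_nhds.smul hv').add (hμ'.smul hv.self_of_nhds)).congr_of_eventuallyEq hfirst)
  linear_combination (norm := module) h

end EigenpairPath

section Diagonal

variable {𝕜 ι : Type*} [RCLike 𝕜] [Fintype ι] [DecidableEq ι] {d : ι → ℝ} {C : Matrix ι ι 𝕜}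
  {j : ι} {x : ι → 𝕜} {a : ℝ}

theorem diagonal_first_order_apply
    (h : diagonal (fun i => (d i : 𝕜)) *ᵥ x + C *ᵥ Pi.single j 1 =
      d j • x + a • (Pi.single j 1 : ι → 𝕜))
    (k : ι) : (d k : 𝕜) * x k + C k j = d j * x k + if k = j then (a : 𝕜) else 0 := by
  simpa [mulVec_diagonal, mulVec_single_one, RCLike.real_smul_eq_coe_mul, Pi.single_apply]
    using congrFun h k

theorem diagonal_first_order_self
    (h : diagonal (fun i => (d i : 𝕜)) *ᵥ x + C *ᵥ Pi.single j 1 =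
      d j • x + a • (Pi.single j 1 : ι → 𝕜)) :
    (a : 𝕜) = C j j := by
  simpa using (diagonal_first_order_apply h j).symm

theorem diagonal_first_order_of_ne (hd : Function.Injective d)
    (h : diagonal (fun i => (d i : 𝕜)) *ᵥ x + C *ᵥ Pi.single j 1 =
      d j • x + a • (Pi.single j 1 : ι → 𝕜))
    {k : ι} (hk : k ≠ j) : x k = C k j / (d j - d k) := by
  have hdk : (d j : 𝕜) - d k ≠ 0 := by exact_mod_cast sub_ne_zero.2 (hd.ne hk.symm)
  have hk' := diagonal_first_order_apply h k
  rw [if_neg hk] at hk'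
  rw [eq_div_iff hdk]
  linear_combination -hk'

theorem second_variation_diagonal_add_smul (hd : Function.Injective d) (hC : C.IsHermitian)
    {v v' : ℝ → ι → 𝕜} {y : ι → 𝕜} {μ μ' : ℝ → ℝ} {b : ℝ}
    (heq : ∀ᶠ s in 𝓝 0, (diagonal (fun i => (d i : 𝕜)) + s • C) *ᵥ v s = μ s • v s)
    (hv : ∀ᶠ s in 𝓝 0, HasDerivAt v (v' s) s) (hv' : HasDerivAt v' y 0)
    (hμ : ∀ᶠ s in 𝓝 0, HasDerivAt μ (μ' s) s) (hμ' : HasDerivAt μ' b 0)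
    (hv0 : v 0 = Pi.single j 1) (hμ0 : μ 0 = d j) :
    b = 2 * ∑ k ∈ Finset.univ.erase j, ‖C k j‖ ^ 2 / (d j - d k) := by
  have hfirst := eigenpair_first_order heq hv.self_of_nhds hμ.self_of_nhds
  have hsecond := eigenpair_second_order heq hv hv' hμ hμ'
  simp only [zero_smul, add_zero, hv0, hμ0] at hfirst hsecond
  have hj : (b : 𝕜) = 2 * ∑ k ∈ Finset.univ.erase j, C j k * v' 0 k := by
    have hcomp := congrFun hsecond j
    simp only [Pi.add_apply, Pi.smul_apply, mulVec_diagonal, RCLike.real_smul_eq_coe_mul,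
      Pi.single_eq_same] at hcomp
    have hsum : (C *ᵥ v' 0) j = C j j * v' 0 j + ∑ k ∈ Finset.univ.erase j, C j k * v' 0 k :=
      (Finset.add_sum_erase _ _ (Finset.mem_univ j)).symm
    push_cast at hcomp
    linear_combination -hcomp + 2 * hsum - 2 * v' 0 j * diagonal_first_order_self hfirst
  have hterm : ∀ k ∈ Finset.univ.erase j,
      C j k * v' 0 k = ((‖C k j‖ ^ 2 / (d j - d k) : ℝ) : 𝕜) := by
    intro k hk
    rw [diagonal_first_order_of_ne hd hfirst (Finset.ne_of_mem_erase hk), ← hC.apply j k,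
      RCLike.star_def, mul_div_assoc', RCLike.conj_mul]
    push_cast
    ring
  rw [Finset.sum_congr rfl hterm] at hj
  exact_mod_cast hj

end Diagonal

theorem Matrix.conjTranspose_mulVec_eigen_of_unitary_conj {𝕜 ι : Type*} [RCLike 𝕜] [Fintype ι]
    [DecidableEq ι] {Q Λ B : Matrix ι ι 𝕜} (hQ : Q ∈ unitaryGroup ι 𝕜) {t : ℝ} {μ : 𝕜}
    {w : ι → 𝕜}
    (h : (Q * Λ * Qᴴ + t • B) *ᵥ w = μ • w) :
    (Λ + t • (Qᴴ * B * Q)) *ᵥ (Qᴴ *ᵥ w) = μ • (Qᴴ *ᵥ w) := by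
  have hQ₁ : Qᴴ * Q = 1 := mem_unitaryGroup_iff'.mp hQ
  have hQ₂ : Q * Qᴴ = 1 := mem_unitaryGroup_iff.mp hQ
  have hconj : Qᴴ * (Q * Λ * Qᴴ + t • B) = (Λ + t • (Qᴴ * B * Q)) * Qᴴ := by
    rw [Matrix.mul_add, Matrix.add_mul, Matrix.mul_smul, Matrix.smul_mul, ← Matrix.mul_assoc,
      ← Matrix.mul_assoc, hQ₁, Matrix.one_mul, Matrix.mul_assoc _ Q, hQ₂, Matrix.mul_one]
  rw [mulVec_mulVec, ← hconj, ← mulVec_mulVec, h, mulVec_smul]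

theorem second_hadamard_variation_general (n : ℕ) (lam : Fin n → ℝ) (hlam : StrictMono lam)
    (Q Λ M B : Matrix (Fin n) (Fin n) ℂ)
    (hQ : Q ∈ Matrix.unitaryGroup (Fin n) ℂ)
    (hΛ : Λ = Matrix.diagonal fun i => (lam i : ℂ))
    (hM : M = Q * Λ * Qᴴ) (hB : B.IsHermitian)
    (j : Fin n) (ε : ℝ) (hε : 0 < ε)
    (lamt : ℝ → ℝ) (w : ℝ → Fin n → ℂ)
    (hl0 : lamt 0 = lam j) (hw0 : w 0 = fun i => Q i j)
    (heig : ∀ t : ℝ, |t| < ε → (M + t • B).mulVec (w t) = (lamt t : ℂ) • w t)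
    (hd1 : ∀ t : ℝ, |t| < ε → DifferentiableAt ℝ lamt t)
    (hd1w : ∀ t : ℝ, |t| < ε → DifferentiableAt ℝ w t)
    (hd2 : DifferentiableAt ℝ (deriv lamt) 0)
    (hd2w : DifferentiableAt ℝ (deriv w) 0) :
    deriv (deriv lamt) 0 =
      2 * ∑ k ∈ Finset.univ.erase j, ‖(Qᴴ * B * Q) k j‖ ^ 2 / (lam j - lam k) := by
  have hnear : ∀ᶠ t in 𝓝 (0 : ℝ), |t| < ε :=
    (isOpen_lt continuous_abs continuous_const).mem_nhds (by simpa using hε)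
  subst hΛ hM
  refine second_variation_diagonal_add_smul (v := fun t => Qᴴ *ᵥ w t)
    (v' := fun t => Qᴴ *ᵥ deriv w t) hlam.injective (isHermitian_conjTranspose_mul_mul Q hB)
    ?_ ?_ (hd2w.hasDerivAt.matrix_mulVec Qᴴ) ?_ hd2.hasDerivAt ?_ hl0
  · filter_upwards [hnear] with t ht
    rw [RCLike.real_smul_eq_coe_smul (K := ℂ)]
    exact conjTranspose_mulVec_eigen_of_unitary_conj hQ (heig t ht)
  · filter_upwards [hnear] with t ht using (hd1w t ht).hasDerivAt.matrix_mulVec Qᴴ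
  · filter_upwards [hnear] with t ht using (hd1 t ht).hasDerivAt
  · rw [hw0, show (fun i => Q i j) = Q *ᵥ Pi.single j 1 from (mulVec_single_one Q j).symm,
      mulVec_mulVec, show Qᴴ * Q = 1 from mem_unitaryGroup_iff'.mp hQ, one_mulVec]

/-- Second Hadamard variation formula: let `M = QΛQ*` be Hermitian with simple spectrum
(`Λ = diag(λ₁ < … < λₙ)`, `Q` unitary), `B` Hermitian, and let `λ(t)`, `w(t)` be an
eigenvalue/unit-eigenvector family for `M + tB` twice differentiable at `0` with
`λ(0) = λ_j`, `w(0) = Q e_j`. Then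
`λ″(0) = 2 Σ_{k ≠ j} |(Q* B Q)_{kj}|² / (λ_j − λ_k)`. -/
theorem second_hadamard_variation (n : ℕ) (lam : Fin n → ℝ) (hlam : StrictMono lam)
    (Q Λ M B : Matrix (Fin n) (Fin n) ℂ)
    (hQ : Q ∈ Matrix.unitaryGroup (Fin n) ℂ)
    (hΛ : Λ = Matrix.diagonal fun i => (lam i : ℂ))
    (hM : M = Q * Λ * Qᴴ) (hB : B.IsHermitian)
    (j : Fin n) (ε : ℝ) (hε : 0 < ε)
    (lamt : ℝ → ℝ) (w : ℝ → Fin n → ℂ)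
    (hl0 : lamt 0 = lam j) (hw0 : w 0 = fun i => Q i j)
    (heig : ∀ t : ℝ, |t| < ε → (M + t • B).mulVec (w t) = (lamt t : ℂ) • w t)
    (hnorm : ∀ t : ℝ, |t| < ε → ∑ i, ‖w t i‖ ^ 2 = 1)
    (hd1 : ∀ t : ℝ, |t| < ε → DifferentiableAt ℝ lamt t)
    (hd1w : ∀ t : ℝ, |t| < ε → DifferentiableAt ℝ w t)
    (hd2 : DifferentiableAt ℝ (deriv lamt) 0)
    (hd2w : DifferentiableAt ℝ (deriv w) 0) :
    deriv (deriv lamt) 0 =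
      2 * ∑ k ∈ Finset.univ.erase j, ‖(Qᴴ * B * Q) k j‖ ^ 2 / (lam j - lam k) :=
  second_hadamard_variation_general n lam hlam Q Λ M B hQ hΛ hM hB j ε hε lamt w hl0 hw0 heig hd1
    hd1w hd2 hd2w
end

section
/- Mean curvature of the isospectral orbit: let Λ = diag(λ₁,…,λₙ) with λ₁ < … < λₙ. For 1 ≤ k < l ≤ n set A_{kl} = (λ_l−λ_k)⁻¹ E_{kl} and B_{kl} = i(λ_l−λ_k)⁻¹ e_{kl}, where E_{kl} = (e_k⊗e_l − e_l⊗e_k)/√2 and e_{kl} = (e_k⊗e_l + e_l⊗e_k)/√2 (these are the anti-Hermitian generators of the orthonormal tangent basis of the isospectral orbit at Λ). Let D(H) denote the diagonal part of a matrix H. Then Σ_{1 ≤ k < l ≤ n} [ D([A_{kl}, [A_{kl}, Λ]]) + D([B_{kl}, [B_{kl}, Λ]]) ] = 2 Σ_{k=1}^{n} ( Σ_{l ≠ k} 1/(λ_l − λ_k) ) e_k⊗e_k. (The left-hand side is the trace of the second fundamental form of the isospectral orbit Σ_Λ ⊂ H(n) at Λ, i.e. the mean curvature vector H_Λ.) 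-/
/-!
For any matrix `P` and `Λ = diag d`, the diagonal entries of `[P, [P, Λ]]` are
`2 ∑ⱼ P i j * P j i * (d i - d j)`. For both generators `A_{kl}` and `B_{kl}` the products
`P i j * P j i` vanish unless `{i, j} = {k, l}`, where they equal `-(λ_l - λ_k)⁻² / 2`.
Hence the pair `k < l` contributes `2 (λ_l - λ_k)⁻¹` at `k` and `2 (λ_k - λ_l)⁻¹` at `l`, and
summing over pairs collects, at each `i`, the term `2 (λ_j - λ_i)⁻¹` for every `j ≠ i`.
-/

open Matrix

theorem diagonal_finsetSum {ι n α : Type*} [DecidableEq n] [AddCommMonoid α] (s : Finset ι)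
    (f : ι → n → α) : diagonal (∑ p ∈ s, f p) = ∑ p ∈ s, diagonal (f p) :=
  map_sum (diagonalAddMonoidHom n α) f s

theorem sum_filter_lt_ite_eq_sum_erase {ι M : Type*} [Fintype ι] [LinearOrder ι] [AddCommMonoid M]
    (h : ι → M) (i : ι) :
    ∑ p ∈ Finset.univ.filter (fun p : ι × ι => p.1 < p.2),
        (if i = p.1 then h p.2 else if i = p.2 then h p.1 else 0)
      = ∑ j ∈ Finset.univ.erase i, h j := by
  have pair_term (a b : ι) :
      (if a < b then (if i = a then h b else if i = b then h a else 0) else 0)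
        = (if a = i then (if i < b then h b else 0) else 0)
          + (if b = i then (if a < i then h a else 0) else 0) := by
    split_ifs <;> subst_vars <;> simp_all
  have ne_term (j : ι) : (if j ≠ i then h j else 0)
      = (if i < j then h j else 0) + (if j < i then h j else 0) := by
    split_ifs <;> first | order | simp_all
  rw [Finset.sum_filter, Fintype.sum_prod_type, ← Finset.filter_ne', Finset.sum_filter]
  simp only [pair_term, ne_term, Finset.sum_add_distrib, Finset.sum_ite_eq', Finset.mem_univ,
    if_true]
  rw [Finset.sum_comm]
  simp only [Finset.sum_ite_eq', Finset.mem_univ, if_true]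

section

variable {ι R : Type*} [Fintype ι] [DecidableEq ι] [CommRing R]

theorem lie_lie_diagonal_apply_self (P : Matrix ι ι R) (d : ι → R) (i : ι) :
    ⁅P, ⁅P, diagonal d⁆⁆ i i = 2 * ∑ j, P i j * P j i * (d i - d j) := by
  rw [Ring.lie_def, Ring.lie_def, Matrix.sub_apply, mul_apply, mul_apply, Finset.mul_sum,
    ← Finset.sum_sub_distrib]
  refine Finset.sum_congr rfl fun j _ => ?_
  simp only [Matrix.sub_apply, mul_diagonal, diagonal_mul]
  ring

theorem lie_lie_diagonal_apply_self_of_single_add_single {k l : ι} (hkl : k ≠ l) (r e : R)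
    (d : ι → R) (i : ι) :
    ⁅r • (single k l 1 + single l k e), ⁅r • (single k l 1 + single l k e), diagonal d⁆⁆ i i
      = 2 * r ^ 2 * e * (if i = k then d k - d l else if i = l then d l - d k else 0) := by
  rw [lie_lie_diagonal_apply_self]
  split_ifs with hik hil
  · subst hik
    simp only [Matrix.smul_apply, Matrix.add_apply, single_apply, hkl.symm, true_and, false_and,
      and_true, and_false, smul_eq_mul, add_zero, zero_add, mul_ite, mul_one, mul_zero, ite_mul,
      zero_mul, Finset.sum_ite_eq, Finset.mem_univ, ↓reduceIte]
    ring
  · subst hil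
    simp only [Matrix.smul_apply, Matrix.add_apply, single_apply_of_ne, single_apply, hkl,
      not_false_eq_true, true_and, false_and, and_true, and_false, smul_eq_mul, add_zero, zero_add,
      mul_ite, mul_one, mul_zero, ite_mul, zero_mul, Finset.sum_ite_eq, Finset.mem_univ, ↓reduceIte]
    ring
  · simp [Ne.symm hik, Ne.symm hil]

theorem lie_lie_isospectral_generators_apply_self (lam : ι → ℝ) {k l : ι} (hkl : k ≠ l)
    (A B : Matrix ι ι ℂ)
    (hA : A = ((lam l - lam k)⁻¹ : ℝ) • ((√2)⁻¹ • (single k l (1 : ℂ) - single l k 1)))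
    (hB : B = Complex.I • (((lam l - lam k)⁻¹ : ℝ) • ((√2)⁻¹ •
      (single k l (1 : ℂ) + single l k 1))))
    (i : ι) :
    ⁅A, ⁅A, diagonal fun i => (lam i : ℂ)⁆⁆ i i + ⁅B, ⁅B, diagonal fun i => (lam i : ℂ)⁆⁆ i i
      = if i = k then 2 * ((lam l : ℂ) - lam i)⁻¹
        else if i = l then 2 * ((lam k : ℂ) - lam i)⁻¹ else 0 := by
  set c : ℂ := (((lam l - lam k)⁻¹ * (√2)⁻¹ : ℝ) : ℂ)
  have hA' : A = c • (single k l 1 + single l k (-1)) := by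
    rw [hA, ← single_neg, ← sub_eq_add_neg, smul_smul, Complex.coe_smul]
  have hB' : B = (Complex.I * c) • (single k l 1 + single l k 1) := by
    rw [hB, smul_smul, ← Complex.coe_smul, smul_smul]
  have hc : c ^ 2 = ((lam l : ℂ) - lam k)⁻¹ ^ 2 / 2 := by
    rw [← Complex.ofReal_pow, mul_pow, inv_pow (√2), Real.sq_sqrt zero_le_two]
    push_cast
    ring
  have inv_sq_mul (x : ℂ) : x⁻¹ ^ 2 * x = x⁻¹ := by
    simpa [sq, mul_right_comm] using mul_inv_mul_cancel x⁻¹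
  rw [hA', hB', lie_lie_diagonal_apply_self_of_single_add_single hkl,
    lie_lie_diagonal_apply_self_of_single_add_single hkl, mul_pow, Complex.I_sq, hc]
  split_ifs with hk hl
  · subst hk
    linear_combination 2 * inv_sq_mul ((lam l : ℂ) - lam i)
  · subst hl
    rw [← neg_sub (lam i : ℂ), inv_neg]
    linear_combination (-2) * inv_sq_mul ((lam i : ℂ) - lam k)
  · ring

end

theorem mean_curvature_of_isospectral_orbit_general (n : ℕ) (lam : Fin n → ℝ)
    (Λ : Matrix (Fin n) (Fin n) ℂ)
    (hΛ : Λ = Matrix.diagonal fun i => (lam i : ℂ))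
    (A B : Fin n → Fin n → Matrix (Fin n) (Fin n) ℂ)
    (hA : ∀ k l, A k l = ((lam l - lam k)⁻¹ : ℝ) • ((Real.sqrt 2)⁻¹ •
      (Matrix.single k l (1 : ℂ) - Matrix.single l k 1)))
    (hB : ∀ k l, B k l = Complex.I • (((lam l - lam k)⁻¹ : ℝ) • ((Real.sqrt 2)⁻¹ •
      (Matrix.single k l (1 : ℂ) + Matrix.single l k 1))))
    (D : Matrix (Fin n) (Fin n) ℂ → Matrix (Fin n) (Fin n) ℂ)
    (hD : ∀ H, D H = Matrix.diagonal fun i => H i i) :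
    ∑ p ∈ Finset.univ.filter (fun p : Fin n × Fin n => p.1 < p.2),
        (D (A p.1 p.2 * (A p.1 p.2 * Λ - Λ * A p.1 p.2)
            - (A p.1 p.2 * Λ - Λ * A p.1 p.2) * A p.1 p.2)
          + D (B p.1 p.2 * (B p.1 p.2 * Λ - Λ * B p.1 p.2)
            - (B p.1 p.2 * Λ - Λ * B p.1 p.2) * B p.1 p.2))
      = Matrix.diagonal fun k =>
          ((2 * ∑ l ∈ Finset.univ.erase k, (lam l - lam k)⁻¹ : ℝ) : ℂ) := by
  subst hΛ
  simp only [hD, diagonal_add, ← Ring.lie_def]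
  rw [← diagonal_finsetSum]
  refine congrArg diagonal (funext fun i => ?_)
  rw [Finset.sum_apply, Finset.sum_congr rfl fun p hp =>
      lie_lie_isospectral_generators_apply_self lam (Finset.mem_filter.1 hp).2.ne _ _
        (hA _ _) (hB _ _) i,
    sum_filter_lt_ite_eq_sum_erase fun j => 2 * ((lam j : ℂ) - lam i)⁻¹]
  push_cast
  rw [Finset.mul_sum]

/-- Mean curvature of the isospectral orbit: with `Λ = diag(λ₁ < … < λₙ)`,
`A_{kl} = (λ_l−λ_k)⁻¹ E_{kl}` and `B_{kl} = i(λ_l−λ_k)⁻¹ e_{kl}` (the anti-Hermitian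
generators of the orthonormal tangent basis), and `D(H)` the diagonal part of `H`, one
has `Σ_{k<l} ( D([A_{kl},[A_{kl},Λ]]) + D([B_{kl},[B_{kl},Λ]]) )
= 2 Σ_k ( Σ_{l≠k} 1/(λ_l − λ_k) ) e_k⊗e_k`. -/
theorem mean_curvature_of_isospectral_orbit (n : ℕ) (lam : Fin n → ℝ)
    (hlam : StrictMono lam)
    (Λ : Matrix (Fin n) (Fin n) ℂ)
    (hΛ : Λ = Matrix.diagonal fun i => (lam i : ℂ))
    (A B : Fin n → Fin n → Matrix (Fin n) (Fin n) ℂ)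
    (hA : ∀ k l, A k l = ((lam l - lam k)⁻¹ : ℝ) • ((Real.sqrt 2)⁻¹ •
      (Matrix.single k l (1 : ℂ) - Matrix.single l k 1)))
    (hB : ∀ k l, B k l = Complex.I • (((lam l - lam k)⁻¹ : ℝ) • ((Real.sqrt 2)⁻¹ •
      (Matrix.single k l (1 : ℂ) + Matrix.single l k 1))))
    (D : Matrix (Fin n) (Fin n) ℂ → Matrix (Fin n) (Fin n) ℂ)
    (hD : ∀ H, D H = Matrix.diagonal fun i => H i i) :
    ∑ p ∈ Finset.univ.filter (fun p : Fin n × Fin n => p.1 < p.2),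
        (D (A p.1 p.2 * (A p.1 p.2 * Λ - Λ * A p.1 p.2)
            - (A p.1 p.2 * Λ - Λ * A p.1 p.2) * A p.1 p.2)
          + D (B p.1 p.2 * (B p.1 p.2 * Λ - Λ * B p.1 p.2)
            - (B p.1 p.2 * Λ - Λ * B p.1 p.2) * B p.1 p.2))
      = Matrix.diagonal fun k =>
          ((2 * ∑ l ∈ Finset.univ.erase k, (lam l - lam k)⁻¹ : ℝ) : ℂ) :=
  mean_curvature_of_isospectral_orbit_general n lam Λ hΛ A B hA hB D hD
end

section
/- Global existence for the Coulomb repulsion ODE: let λ⁰ = (λ⁰₁,…,λ⁰ₙ) lie in the open Weyl chamber W_n = {λ ∈ ℝⁿ : λ₁ < λ₂ < … < λₙ}. Then there exists a unique continuously differentiable function λ : [0,∞) → W_n with λ(0) = λ⁰ satisfying, for each j and all t ≥ 0, λ_j′(t) = Σ_{k ≠ j} 1/(λ_j(t) − λ_k(t)); in particular the eigenvalue trajectories never collide and are defined for all time. -/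
/-!
Along a solution in the Weyl chamber, `d/dt ∑ⱼ λⱼ² = n (n - 1)` and
`d/dt ∑_{j<k} log (λₖ - λⱼ) = ∑ⱼ λⱼ'² ≥ 0`. The first bounds the trajectory on `[0, T]`, hence
every gap from above; with the second this bounds every gap from below by a constant depending
only on `λ⁰` and `T`. On configurations with gaps bounded below the vector field is bounded and
Lipschitz, so Picard–Lindelöf gives local solutions on a time step that is uniform up to time `T`;
iterating it reaches `T`, and the Lipschitz bound gives uniqueness.
-/

open Set Metric
open scoped NNReal
open Finset (univ)

section Continuation

variable {E : Type*} [NormedAddCommGroup E] [NormedSpace ℝ E]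
  {v : ℝ → E → E} {U : Set E} {x₀ : E} {γ γ' : ℝ → E} {s s' : Set ℝ}

lemma isIntegralCurveOn_singleton (γ : ℝ → E) (v : ℝ → E → E) (t : ℝ) :
    IsIntegralCurveOn γ v {t} := by
  rintro _ rfl
  refine HasFDerivWithinAt.of_not_accPt ?_
  rw [accPt_principal_iff_nhdsWithin]
  simp

lemma IsIntegralCurveOn.congr (h : IsIntegralCurveOn γ v s) (hγ : EqOn γ' γ s) :
    IsIntegralCurveOn γ' v s := fun t ht => by
  rw [hγ ht]
  exact (h t ht).congr_of_mem hγ ht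

lemma IsIntegralCurveOn.hasDerivWithinAt_of_isClosed (h : IsIntegralCurveOn γ v s)
    (hs : IsClosed s) (t : ℝ) : HasDerivWithinAt γ (v t (γ t)) s t := by
  by_cases ht : t ∈ s
  · exact h t ht
  · exact HasFDerivWithinAt.of_notMem_closure (by rwa [hs.closure_eq])

lemma IsIntegralCurveOn.union_of_isClosed (h : IsIntegralCurveOn γ v s)
    (h' : IsIntegralCurveOn γ v s') (hs : IsClosed s) (hs' : IsClosed s') :
    IsIntegralCurveOn γ v (s ∪ s') := fun t _ =>
  (h.hasDerivWithinAt_of_isClosed hs t).union (h'.hasDerivWithinAt_of_isClosed hs' t)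

theorem IsIntegralCurveOn.Icc_ite {f : ℝ → E} {a b c : ℝ} (hab : a ≤ b) (hbc : b ≤ c)
    (hγ : IsIntegralCurveOn γ v (Icc a b)) (hf : IsIntegralCurveOn f v (Icc b c))
    (hfb : f b = γ b) :
    IsIntegralCurveOn (fun t => if t ≤ b then γ t else f t) v (Icc a c) := by
  rw [← Icc_union_Icc_eq_Icc hab hbc]
  refine (hγ.congr fun t ht => if_pos ht.2).union_of_isClosed (hf.congr fun t ht => ?_)
    isClosed_Icc isClosed_Icc
  by_cases htb : t ≤ b
  · simp [le_antisymm htb ht.1, hfb]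
  · exact if_neg htb

def IsSolutionOn (v : ℝ → E → E) (U : Set E) (x₀ : E) (s : Set ℝ) (γ : ℝ → E) : Prop :=
  γ 0 = x₀ ∧ IsIntegralCurveOn γ v s ∧ MapsTo γ s U

lemma IsSolutionOn.mono (h : IsSolutionOn v U x₀ s γ) (hs : s' ⊆ s) :
    IsSolutionOn v U x₀ s' γ :=
  ⟨h.1, h.2.1.mono hs, h.2.2.mono_left hs⟩

theorem exists_isSolutionOn_Icc_of_uniform_step {T ε : ℝ} (hT : 0 ≤ T) (hε : 0 < ε)
    (hx₀ : x₀ ∈ U)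
    (hstep : ∀ S ∈ Icc 0 T, ∀ γ, IsSolutionOn v U x₀ (Icc 0 S) γ → ∃ f : ℝ → E,
      f S = γ S ∧ IsIntegralCurveOn f v (Icc S (S + ε)) ∧ MapsTo f (Icc S (S + ε)) U) :
    ∃ γ, IsSolutionOn v U x₀ (Icc 0 T) γ := by
  have reach : ∀ m : ℕ, ∃ γ, IsSolutionOn v U x₀ (Icc 0 (min (m * ε) T)) γ := by
    intro m
    induction m with
    | zero =>
      refine ⟨fun _ => x₀, rfl, ?_, fun _ _ => hx₀⟩
      simpa [min_eq_left hT] using isIntegralCurveOn_singleton _ v 0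
    | succ m ih =>
      obtain ⟨γ, hγ⟩ := ih
      set S := min (m * ε) T
      have hS : S ∈ Icc 0 T := ⟨le_min (by positivity) hT, min_le_right _ _⟩
      obtain ⟨f, hfS, hf, hfU⟩ := hstep S hS γ hγ
      have hglued :
          IsSolutionOn v U x₀ (Icc 0 (S + ε)) (fun t => if t ≤ S then γ t else f t) := by
        refine ⟨by simp [hS.1, hγ.1], hγ.2.1.Icc_ite hS.1 (by linarith) hf hfS, fun t ht => ?_⟩
        by_cases htS : t ≤ S
        · simpa [htS] using hγ.2.2 ⟨ht.1, htS⟩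
        · simpa [htS] using hfU ⟨(not_le.1 htS).le, ht.2⟩
      refine ⟨_, hglued.mono (Icc_subset_Icc_right ?_)⟩
      push_cast
      rcases min_cases (m * ε) T with h | h <;> simp only [S, h.1] <;>
        linarith [min_le_left ((m + 1) * ε) T, min_le_right ((m + 1) * ε) T]
  obtain ⟨m, hm⟩ := exists_nat_ge (T / ε)
  obtain ⟨γ, hγ⟩ := reach m
  rw [min_eq_right ((div_le_iff₀ hε).1 hm)] at hγ
  exact ⟨γ, hγ⟩

theorem exists_isSolutionOn_Ici_of_forall_Icc
    (hex : ∀ T, 0 ≤ T → ∃ γ, IsSolutionOn v U x₀ (Icc 0 T) γ)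
    (huniq : ∀ T γ₁ γ₂, IsSolutionOn v U x₀ (Icc 0 T) γ₁ → IsSolutionOn v U x₀ (Icc 0 T) γ₂ →
      EqOn γ₁ γ₂ (Icc 0 T)) :
    ∃ γ, IsSolutionOn v U x₀ (Ici 0) γ := by
  choose! sol hsol using hex
  have hagree : ∀ T, 0 ≤ T → EqOn (fun t => sol t t) (sol T) (Icc 0 T) := fun T hT t ht =>
    huniq t _ _ (hsol t ht.1) ((hsol T hT).mono (Icc_subset_Icc_right ht.2)) ⟨ht.1, le_rfl⟩
  refine ⟨fun t => sol t t, (hsol 0 le_rfl).1, fun t ht => ?_,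
    fun t ht => (hsol t ht).2.2 ⟨ht, le_rfl⟩⟩
  have hT : (0 : ℝ) ≤ t + 1 := by linarith [mem_Ici.1 ht]
  have htT : t ∈ Icc 0 (t + 1) := ⟨ht, by linarith⟩
  have hderiv := ((hsol _ hT).2.1 t htT).congr_of_mem (hagree _ hT) htT
  rw [← hagree _ hT htT] at hderiv
  refine hderiv.mono_of_mem_nhdsWithin ?_
  simpa only [Ici_inter_Iic] using inter_mem_nhdsWithin (Ici 0) (Iic_mem_nhds (lt_add_one t))

end Continuation

section FiniteSums

variable {ι : Type*} [Fintype ι] [DecidableEq ι]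

lemma sum_sum_erase_add_swap (g : ι → ι → ℝ) :
    ∑ j, ∑ k ∈ univ.erase j, (g j k + g k j) = 2 * ∑ j, ∑ k ∈ univ.erase j, g j k := by
  simp only [Finset.sum_add_distrib, two_mul]
  congr 1
  exact Finset.sum_comm' fun j k => by simp [ne_comm]

lemma abs_sum_erase_le {j : ι} {f : ι → ℝ} {c : ℝ} (hc : 0 ≤ c)
    (hf : ∀ k, k ≠ j → |f k| ≤ c) : |∑ k ∈ univ.erase j, f k| ≤ Fintype.card ι * c :=
  calc |∑ k ∈ univ.erase j, f k| ≤ ∑ k ∈ univ.erase j, |f k| := Finset.abs_sum_le_sum_abs _ _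
    _ ≤ (univ.erase j).card • c :=
      Finset.sum_le_card_nsmul _ _ _ fun k hk => hf k (Finset.ne_of_mem_erase hk)
    _ ≤ Fintype.card ι * c := by
      rw [nsmul_eq_mul]
      gcongr
      exact_mod_cast Finset.card_le_univ _

lemma sum_sum_erase_le_add {g : ι → ι → ℝ} {L : ℝ} (hL : 0 ≤ L)
    (hg : ∀ j k, j ≠ k → g j k ≤ L) {j k : ι} (hjk : j ≠ k) :
    ∑ a, ∑ b ∈ univ.erase a, g a b ≤ g j k + Fintype.card ι ^ 2 * L := by
  have hdefect : L - g j k ≤ ∑ a, ∑ b ∈ univ.erase a, (L - g a b) :=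
    calc L - g j k ≤ ∑ b ∈ univ.erase j, (L - g j b) :=
          Finset.single_le_sum
            (fun b hb => sub_nonneg.2 (hg j b (Finset.ne_of_mem_erase hb).symm))
            (Finset.mem_erase.2 ⟨hjk.symm, Finset.mem_univ k⟩)
      _ ≤ _ := Finset.single_le_sum (f := fun a => ∑ b ∈ univ.erase a, (L - g a b))
          (fun a _ => Finset.sum_nonneg fun b hb =>
            sub_nonneg.2 (hg a b (Finset.ne_of_mem_erase hb).symm)) (Finset.mem_univ j)
  have hcount : ∑ a : ι, ∑ _b ∈ univ.erase a, L ≤ Fintype.card ι ^ 2 * L := by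
    simp only [Finset.sum_const, Finset.card_erase_of_mem (Finset.mem_univ _), Finset.card_univ,
      nsmul_eq_mul]
    rw [sq, mul_assoc]
    gcongr
    exact_mod_cast Nat.sub_le _ 1
  simp only [Finset.sum_sub_distrib] at hdefect
  linarith

end FiniteSums

lemma abs_inv_sub_inv_le {a b δ : ℝ} (hδ : 0 < δ) (ha : δ ≤ |a|) (hb : δ ≤ |b|) :
    |a⁻¹ - b⁻¹| ≤ |a - b| / δ ^ 2 := by
  have ha₀ : a ≠ 0 := abs_pos.1 (hδ.trans_le ha)
  have hb₀ : b ≠ 0 := abs_pos.1 (hδ.trans_le hb)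
  rw [inv_sub_inv ha₀ hb₀, abs_div, abs_mul, abs_sub_comm]
  gcongr
  rw [sq]
  gcongr

lemma monotoneOn_Icc_of_hasDerivWithinAt_nonneg {f f' : ℝ → ℝ} {a b : ℝ}
    (hf : ∀ t ∈ Icc a b, HasDerivWithinAt f (f' t) (Icc a b) t)
    (hf' : ∀ t ∈ Icc a b, 0 ≤ f' t) : MonotoneOn f (Icc a b) :=
  monotoneOn_of_hasDerivWithinAt_nonneg (convex_Icc a b)
    (fun t ht => (hf t ht).continuousWithinAt)
    (fun t ht => (hf t (interior_subset ht)).mono interior_subset)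
    (fun t ht => hf' t (interior_subset ht))

theorem IsPicardLindelof.exists_eq_forall_mem_Icc_mem_closedBall_hasDerivWithinAt
    {E : Type*} [NormedAddCommGroup E] [NormedSpace ℝ E] [CompleteSpace E]
    {f : ℝ → E → E} {tmin tmax : ℝ} {t₀ : Icc tmin tmax} {x₀ : E} {a L K : ℝ≥0}
    (hf : IsPicardLindelof f t₀ x₀ a 0 L K) :
    ∃ α : ℝ → E, α t₀ = x₀ ∧ ∀ t ∈ Icc tmin tmax,
      α t ∈ closedBall x₀ a ∧ HasDerivWithinAt α (f t (α t)) (Icc tmin tmax) t := by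
  have hx₀ : x₀ ∈ closedBall x₀ (0 : ℝ≥0) := mem_closedBall_self le_rfl
  obtain ⟨α, hα⟩ := ODE.FunSpace.exists_isFixedPt_next hf hx₀
  have hball : ∀ t, α.compProj t ∈ closedBall x₀ a := fun _ =>
    α.compProj_mem_closedBall hf.mul_max_le
  refine ⟨α.compProj, by rw [ODE.FunSpace.compProj_val, ← hα, ODE.FunSpace.next_apply₀],
    fun t ht => ⟨hball t, ?_⟩⟩
  refine ODE.hasDerivWithinAt_picard_Icc t₀.2 hf.continuousOn_uncurry
    α.continuous_compProj.continuousOn (fun t _ => hball t) x₀ ht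
    |>.congr_of_mem (fun t' ht' => ?_) ht
  nth_rw 1 [← hα]
  rw [ODE.FunSpace.compProj_of_mem ht', ODE.FunSpace.next_apply]

namespace CoulombODE

variable {n : ℕ}

noncomputable def coulombField (x : Fin n → ℝ) : Fin n → ℝ :=
  fun j => ∑ k ∈ univ.erase j, (x j - x k)⁻¹

def weylChamber (n : ℕ) : Set (Fin n → ℝ) := {x | StrictMono x}

def GapsAtLeast (δ : ℝ) (x : Fin n → ℝ) : Prop := ∀ j k, j < k → δ ≤ x k - x j

namespace GapsAtLeast

variable {δ : ℝ} {x : Fin n → ℝ}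

lemma mem_weylChamber (hδ : 0 < δ) (h : GapsAtLeast δ x) : x ∈ weylChamber n :=
  fun j k hjk => by linarith [h j k hjk]

lemma mono {δ' : ℝ} (h : GapsAtLeast δ x) (hδ : δ' ≤ δ) : GapsAtLeast δ' x :=
  fun j k hjk => hδ.trans (h j k hjk)

lemma le_abs_sub (h : GapsAtLeast δ x) {j k : Fin n} (hjk : j ≠ k) : δ ≤ |x j - x k| := by
  rcases hjk.lt_or_gt with hlt | hlt
  · exact (h j k hlt).trans (abs_sub_comm (x j) (x k) ▸ le_abs_self _)
  · exact (h k j hlt).trans (le_abs_self _)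

lemma of_mem_closedBall (h : GapsAtLeast δ x) {y : Fin n → ℝ} {r : ℝ}
    (hy : y ∈ closedBall x r) : GapsAtLeast (δ - 2 * r) y := by
  intro j k hjk
  have hj := abs_le.1 ((dist_le_pi_dist y x j).trans (mem_closedBall.1 hy))
  have hk := abs_le.1 ((dist_le_pi_dist y x k).trans (mem_closedBall.1 hy))
  linarith [h j k hjk, hj.1, hk.2]

end GapsAtLeast

lemma norm_coulombField_le {δ : ℝ} (hδ : 0 < δ) {x : Fin n → ℝ} (h : GapsAtLeast δ x) :
    ‖coulombField x‖ ≤ n / δ := by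
  refine (pi_norm_le_iff_of_nonneg (by positivity)).2 fun j => ?_
  rw [Real.norm_eq_abs, div_eq_mul_inv, coulombField]
  have hterm : ∀ k, k ≠ j → |(x j - x k)⁻¹| ≤ δ⁻¹ := fun k hk => by
    rw [abs_inv]
    exact inv_anti₀ hδ (h.le_abs_sub hk.symm)
  simpa only [Fintype.card_fin] using abs_sum_erase_le (inv_nonneg.2 hδ.le) hterm

lemma lipschitzOnWith_coulombField {δ : ℝ} (hδ : 0 < δ) :
    LipschitzOnWith (2 * n / δ ^ 2).toNNReal coulombField
      {x : Fin n → ℝ | GapsAtLeast δ x} := by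
  refine LipschitzOnWith.of_dist_le_mul fun x hx y hy => ?_
  rw [Real.coe_toNNReal _ (by positivity), dist_pi_le_iff (by positivity)]
  intro j
  have hcoord : ∀ i, |x i - y i| ≤ dist x y := fun i => by
    rw [← Real.dist_eq]
    exact dist_le_pi_dist x y i
  have hterm : ∀ k, k ≠ j → |(x j - x k)⁻¹ - (y j - y k)⁻¹| ≤ 2 / δ ^ 2 * dist x y := by
    intro k hk
    refine (abs_inv_sub_inv_le hδ (hx.le_abs_sub hk.symm) (hy.le_abs_sub hk.symm)).trans ?_
    have : |(x j - x k) - (y j - y k)| ≤ 2 * dist x y := by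
      calc |(x j - x k) - (y j - y k)| = |(x j - y j) - (x k - y k)| := by ring_nf
        _ ≤ |x j - y j| + |x k - y k| := abs_sub _ _
        _ ≤ 2 * dist x y := by linarith [hcoord j, hcoord k]
    rw [div_mul_eq_mul_div]
    gcongr
  have := abs_sum_erase_le (by positivity) hterm
  rw [Real.dist_eq, coulombField, coulombField, ← Finset.sum_sub_distrib]
  simp only [Fintype.card_fin] at this
  exact this.trans_eq (by ring)

lemma sum_two_mul_mul_coulombField {x : Fin n → ℝ} (hx : Function.Injective x) :
    ∑ j, 2 * x j * coulombField x j = n * (n - 1) := by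
  calc ∑ j, 2 * x j * coulombField x j
      = 2 * ∑ j, ∑ k ∈ univ.erase j, x j * (x j - x k)⁻¹ := by
        simp only [coulombField, Finset.mul_sum, mul_assoc]
    _ = ∑ j, ∑ k ∈ univ.erase j, (x j * (x j - x k)⁻¹ + x k * (x k - x j)⁻¹) :=
        (sum_sum_erase_add_swap _).symm
    _ = ∑ j : Fin n, ∑ _k ∈ univ.erase j, (1 : ℝ) := by
        refine Finset.sum_congr rfl fun j _ => Finset.sum_congr rfl fun k hk => ?_
        have hjk : x j - x k ≠ 0 := sub_ne_zero.2 (hx.ne (Finset.ne_of_mem_erase hk).symm)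
        rw [← neg_sub (x j), inv_neg]
        field_simp
        ring
    _ = n * (n - 1) := by
        cases n <;> simp [Finset.card_erase_of_mem]

lemma sum_sum_erase_sub_coulombField_div (x : Fin n → ℝ) :
    ∑ j, ∑ k ∈ univ.erase j, (coulombField x k - coulombField x j) / (x k - x j) =
      2 * ∑ j, coulombField x j ^ 2 := by
  calc ∑ j, ∑ k ∈ univ.erase j, (coulombField x k - coulombField x j) / (x k - x j)
      = ∑ j, ∑ k ∈ univ.erase j,
          (coulombField x j * (x j - x k)⁻¹ + coulombField x k * (x k - x j)⁻¹) := by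
        refine Finset.sum_congr rfl fun j _ => Finset.sum_congr rfl fun k _ => ?_
        rw [sub_div, div_eq_mul_inv, div_eq_mul_inv, ← neg_sub (x j), inv_neg]
        ring
    _ = 2 * ∑ j, coulombField x j ^ 2 := by
        rw [sum_sum_erase_add_swap]
        simp only [sq, coulombField, Finset.mul_sum]

/-- `Real.log` is `log |·|`, so on the Weyl chamber this is `2 ∑_{j<k} log (x k - x j)`. -/
noncomputable def logGapSum (x : Fin n → ℝ) : ℝ :=
  ∑ j, ∑ k ∈ univ.erase j, Real.log (x k - x j)

/-- Along a solution `∑ xⱼ²` grows at rate `n (n - 1) ≤ n²`, so on `[0, T]` every gap is at most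
`2 √(∑ x₀ⱼ² + n² T) + 1`; since `logGapSum` does not decrease, no single gap can then fall
below `gapBound x₀ T`. -/
noncomputable def gapBound (x₀ : Fin n → ℝ) (T : ℝ) : ℝ :=
  Real.exp (logGapSum x₀ - n ^ 2 * Real.log (2 * √(∑ j, x₀ j ^ 2 + n ^ 2 * T) + 1))

lemma gapBound_pos (x₀ : Fin n → ℝ) (T : ℝ) : 0 < gapBound x₀ T := Real.exp_pos _

lemma gapBound_anti (x₀ : Fin n → ℝ) : Antitone (gapBound x₀) := by
  intro S T hST
  unfold gapBound
  gcongr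

def IsCoulombSolution (x₀ : Fin n → ℝ) (s : Set ℝ) (γ : ℝ → Fin n → ℝ) : Prop :=
  IsSolutionOn (fun _ => coulombField) (weylChamber n) x₀ s γ

section APriori

variable {x₀ : Fin n → ℝ} {T : ℝ} {γ : ℝ → Fin n → ℝ}

lemma IsCoulombSolution.hasDerivWithinAt_apply (hγ : IsCoulombSolution x₀ (Icc 0 T) γ) {t : ℝ}
    (ht : t ∈ Icc 0 T) (j : Fin n) :
    HasDerivWithinAt (fun s => γ s j) (coulombField (γ t) j) (Icc 0 T) t :=
  hasDerivWithinAt_pi.1 (hγ.2.1 t ht) j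

lemma IsCoulombSolution.sum_sq_le (hγ : IsCoulombSolution x₀ (Icc 0 T) γ) {t : ℝ}
    (ht : t ∈ Icc 0 T) :
    ∑ j, γ t j ^ 2 ≤ ∑ j, x₀ j ^ 2 + n ^ 2 * t := by
  have hderiv : ∀ s ∈ Icc 0 T, HasDerivWithinAt (fun s => n ^ 2 * s - ∑ j, γ s j ^ 2)
      (n ^ 2 * 1 - ∑ j, 2 * γ s j * coulombField (γ s) j) (Icc 0 T) s := fun s hs =>
    ((hasDerivWithinAt_id s _).const_mul _).sub
      (HasDerivWithinAt.fun_sum fun j _ => by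
        simpa using (hγ.hasDerivWithinAt_apply hs j).fun_pow 2)
  have hmono := monotoneOn_Icc_of_hasDerivWithinAt_nonneg hderiv fun s hs => by
    rw [sum_two_mul_mul_coulombField (hγ.2.2 hs).injective]
    nlinarith
  have := hmono ⟨le_rfl, ht.1.trans ht.2⟩ ht ht.1
  simp only [mul_zero, zero_sub, hγ.1] at this
  linarith

lemma IsCoulombSolution.abs_sub_le (hγ : IsCoulombSolution x₀ (Icc 0 T) γ) {t : ℝ}
    (ht : t ∈ Icc 0 T) (j k : Fin n) :
    |γ t j - γ t k| ≤ 2 * √(∑ j, x₀ j ^ 2 + n ^ 2 * T) := by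
  have habs : ∀ i, |γ t i| ≤ √(∑ j, x₀ j ^ 2 + n ^ 2 * T) := fun i =>
    Real.abs_le_sqrt <| calc
      γ t i ^ 2 ≤ ∑ j, γ t j ^ 2 :=
        Finset.single_le_sum (fun j _ => sq_nonneg (γ t j)) (Finset.mem_univ i)
      _ ≤ ∑ j, x₀ j ^ 2 + n ^ 2 * T := by nlinarith [hγ.sum_sq_le ht, ht.2]
  linarith [abs_sub (γ t j) (γ t k), habs j, habs k]

lemma IsCoulombSolution.logGapSum_le (hγ : IsCoulombSolution x₀ (Icc 0 T) γ) {t : ℝ}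
    (ht : t ∈ Icc 0 T) : logGapSum x₀ ≤ logGapSum (γ t) := by
  have hderiv : ∀ s ∈ Icc 0 T, HasDerivWithinAt (fun s => logGapSum (γ s))
      (2 * ∑ j, coulombField (γ s) j ^ 2) (Icc 0 T) s := fun s hs => by
    rw [← sum_sum_erase_sub_coulombField_div]
    refine HasDerivWithinAt.fun_sum fun j _ => HasDerivWithinAt.fun_sum fun k hk => ?_
    exact ((hγ.hasDerivWithinAt_apply hs k).sub (hγ.hasDerivWithinAt_apply hs j)).log
      (sub_ne_zero.2 ((hγ.2.2 hs).injective.ne (Finset.ne_of_mem_erase hk)))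
  have hmono := monotoneOn_Icc_of_hasDerivWithinAt_nonneg hderiv fun s _ => by positivity
  simpa [hγ.1] using hmono ⟨le_rfl, ht.1.trans ht.2⟩ ht ht.1

theorem IsCoulombSolution.gapsAtLeast_gapBound (hγ : IsCoulombSolution x₀ (Icc 0 T) γ) {t : ℝ}
    (ht : t ∈ Icc 0 T) :
    GapsAtLeast (gapBound x₀ T) (γ t) := by
  intro j k hjk
  set D := 2 * √(∑ j, x₀ j ^ 2 + n ^ 2 * T) + 1 with hD_def
  have hD : 1 ≤ D := by simp only [D]; linarith [Real.sqrt_nonneg (∑ j, x₀ j ^ 2 + n ^ 2 * T)]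
  have hlog : ∀ a b, a ≠ b → Real.log (γ t b - γ t a) ≤ Real.log D := fun a b hab => by
    rw [← Real.log_abs]
    refine Real.log_le_log (abs_pos.2 (sub_ne_zero.2 ((hγ.2.2 ht).injective.ne hab.symm))) ?_
    linarith [hγ.abs_sub_le ht b a]
  have hsum : logGapSum (γ t) ≤ Real.log (γ t k - γ t j) + n ^ 2 * Real.log D := by
    have := sum_sum_erase_le_add (Real.log_nonneg hD) hlog hjk.ne
    rw [Fintype.card_fin] at this
    exact this
  have hgap : 0 < γ t k - γ t j := sub_pos.2 (hγ.2.2 ht hjk)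
  calc gapBound x₀ T ≤ Real.exp (Real.log (γ t k - γ t j)) := by
        unfold gapBound
        rw [← hD_def]
        gcongr
        linarith [hγ.logGapSum_le ht]
    _ = γ t k - γ t j := Real.exp_log hgap

end APriori

theorem IsCoulombSolution.eqOn {x₀ : Fin n → ℝ} {T : ℝ} {γ₁ γ₂ : ℝ → Fin n → ℝ}
    (h₁ : IsCoulombSolution x₀ (Icc 0 T) γ₁) (h₂ : IsCoulombSolution x₀ (Icc 0 T) γ₂) :
    EqOn γ₁ γ₂ (Icc 0 T) :=
  ODE_solution_unique_of_mem_Icc_right (s := fun _ => {x | GapsAtLeast (gapBound x₀ T) x})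
    (fun _ _ => lipschitzOnWith_coulombField (gapBound_pos x₀ T))
    h₁.2.1.continuousOn
    (fun t ht => (h₁.2.1 t (Ico_subset_Icc_self ht)).mono_of_mem_nhdsWithin
      (Icc_mem_nhdsGE_of_mem ht))
    (fun _ ht => h₁.gapsAtLeast_gapBound (Ico_subset_Icc_self ht))
    h₂.2.1.continuousOn
    (fun t ht => (h₂.2.1 t (Ico_subset_Icc_self ht)).mono_of_mem_nhdsWithin
      (Icc_mem_nhdsGE_of_mem ht))
    (fun _ ht => h₂.gapsAtLeast_gapBound (Ico_subset_Icc_self ht))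
    (h₁.1.trans h₂.1.symm)

theorem exists_uniform_local_solution {δ : ℝ} (hδ : 0 < δ) :
    ∃ ε > 0, ∀ (t₀ : ℝ) (x : Fin n → ℝ), GapsAtLeast δ x → ∃ f : ℝ → Fin n → ℝ, f t₀ = x ∧
      IsIntegralCurveOn f (fun _ => coulombField) (Icc t₀ (t₀ + ε)) ∧
      MapsTo f (Icc t₀ (t₀ + ε)) (weylChamber n) := by
  -- On the ball of radius `δ / 4` all gaps are `≥ δ / 2`, so `‖coulombField‖ ≤ 2 n / δ` there,
  -- and `ε` is chosen so that `(2 n / δ) ε ≤ δ / 4`.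
  refine ⟨δ ^ 2 / (8 * (n + 1)), by positivity, fun t₀ x hx => ?_⟩
  set ε := δ ^ 2 / (8 * (n + 1))
  have hball : ∀ y ∈ closedBall x ((δ / 4).toNNReal : ℝ), GapsAtLeast (δ / 2) y :=
      fun y hy => by
    rw [Real.coe_toNNReal _ (by positivity)] at hy
    exact (hx.of_mem_closedBall hy).mono (by linarith)
  have hpl : IsPicardLindelof (fun _ => coulombField) (tmin := t₀) (tmax := t₀ + ε)
      ⟨t₀, left_mem_Icc.2 (by linarith [show 0 < ε by positivity])⟩ x (δ / 4).toNNReal 0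
      (2 * n / δ).toNNReal (2 * n / (δ / 2) ^ 2).toNNReal := by
    refine .of_time_independent (fun y hy => ?_)
      ((lipschitzOnWith_coulombField (half_pos hδ)).mono hball) ?_
    · rw [Real.coe_toNNReal _ (by positivity)]
      exact (norm_coulombField_le (half_pos hδ) (hball y hy)).trans_eq (by ring)
    · simp only [Real.coe_toNNReal _ (show (0 : ℝ) ≤ 2 * n / δ by positivity),
        Real.coe_toNNReal _ (show (0 : ℝ) ≤ δ / 4 by positivity), NNReal.coe_zero, sub_zero,
        add_sub_cancel_left, sub_self, max_eq_left (show (0 : ℝ) ≤ ε by positivity)]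
      rw [show 2 * n / δ * ε = δ / 4 * (n / (n + 1)) by simp only [ε]; field_simp; ring]
      exact mul_le_of_le_one_right (by positivity) ((div_le_one (by positivity)).2 (by linarith))
  obtain ⟨f, hf₀, hf⟩ := hpl.exists_eq_forall_mem_Icc_mem_closedBall_hasDerivWithinAt
  exact ⟨f, hf₀, fun t ht => (hf t ht).2,
    fun t ht => (hball _ (hf t ht).1).mem_weylChamber (half_pos hδ)⟩

theorem exists_isCoulombSolution_Icc {x₀ : Fin n → ℝ} (h₀ : StrictMono x₀) {T : ℝ}
    (hT : 0 ≤ T) : ∃ γ, IsCoulombSolution x₀ (Icc 0 T) γ := by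
  obtain ⟨ε, hε, hloc⟩ := exists_uniform_local_solution (n := n) (gapBound_pos x₀ T)
  refine exists_isSolutionOn_Icc_of_uniform_step hT hε h₀ fun S hS γ hγ => hloc S (γ S) ?_
  exact (IsCoulombSolution.gapsAtLeast_gapBound hγ ⟨hS.1, le_rfl⟩).mono (gapBound_anti x₀ hS.2)

end CoulombODE

/-- Global existence and uniqueness for the Coulomb repulsion ODE
`λ_j′ = Σ_{k≠j} 1/(λ_j − λ_k)` starting in the open Weyl chamber
`{λ : λ₁ < … < λₙ}` (encoded by `StrictMono`): there is a solution defined for all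
`t ≥ 0` which stays in the Weyl chamber (no collisions), and it is unique on `[0,∞)`. -/
theorem coulomb_ode_global_existence_uniqueness (n : ℕ) (lam0 : Fin n → ℝ)
    (h0 : StrictMono lam0) :
    ∃ lam : ℝ → Fin n → ℝ,
      (lam 0 = lam0 ∧
        ∀ t ∈ Set.Ici (0 : ℝ), StrictMono (lam t) ∧
          HasDerivWithinAt lam
            (fun j => ∑ k ∈ Finset.univ.erase j, (lam t j - lam t k)⁻¹)
            (Set.Ici 0) t) ∧
      ∀ lam' : ℝ → Fin n → ℝ,
        (lam' 0 = lam0 ∧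
          ∀ t ∈ Set.Ici (0 : ℝ), StrictMono (lam' t) ∧
            HasDerivWithinAt lam'
              (fun j => ∑ k ∈ Finset.univ.erase j, (lam' t j - lam' t k)⁻¹)
              (Set.Ici 0) t) →
        Set.EqOn lam' lam (Set.Ici 0) := by
  obtain ⟨lam, hlam⟩ := exists_isSolutionOn_Ici_of_forall_Icc
    (fun _ hT => CoulombODE.exists_isCoulombSolution_Icc h0 hT)
    fun _ _ _ => CoulombODE.IsCoulombSolution.eqOn
  refine ⟨lam, ⟨hlam.1, fun t ht => ⟨hlam.2.2 ht, hlam.2.1 t ht⟩⟩, ?_⟩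
  rintro lam' ⟨hlam'0, hlam'⟩ t ht
  have hsol' : CoulombODE.IsCoulombSolution lam0 (Icc 0 t) lam' :=
    ⟨hlam'0, fun s hs => (hlam' s hs.1).2.mono Icc_subset_Ici_self, fun s hs => (hlam' s hs.1).1⟩
  exact CoulombODE.IsCoulombSolution.eqOn hsol' (hlam.mono Icc_subset_Ici_self) ⟨ht, le_rfl⟩
end
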